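/- arXiv:1807.02361 — 3 statements merged into one kernel-verified Lean document; each statement's English description precedes it below -/
import Mathlib

section
/- (Laplace mechanism is (ε,0)-differentially private.) Let ε > 0, k ≥ 1, Δf > 0, and let f assign to each database a vector in ℝ^k. Suppose D₁, D₂ are two databases with ‖f(D₁) − f(D₂)‖₁ ≤ Δf. Let Z = (Z₁, …, Z_k) be independent random variables each with Laplace distribution of scale λ = Δf/ε and mean 0. Then for every measurable set S ⊆ ℝ^k, P[f(D₁) + Z ∈ S] ≤ e^ε · P[f(D₂) + Z ∈ S]. -/
open MeasureTheory
open scoped BigOperators ENNReal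

/-- The Laplace distribution with scale `lam` and mean `0`, given by its density
`x ↦ (1/(2λ)) · exp (−|x|/λ)` with respect to Lebesgue measure. -/
noncomputable def laplaceMeasure (lam : ℝ) : Measure ℝ :=
  volume.withDensity (fun x => ENNReal.ofReal ((1 / (2 * lam)) * Real.exp (-|x| / lam)))

/-! The Laplace density `p` satisfies `p x ≤ exp (|x - y| / λ) * p y` by the triangle
inequality, so the product density of the noise changes by at most the factor
`exp (‖a - b‖₁ / λ) ≤ exp ε` when it is translated from `b` to `a`. By translation invariance
of Lebesgue measure, the law of `a + Z` has the density of `Z` translated by `a`, so this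
pointwise bound between densities is the claimed bound between the two output laws. -/

namespace MeasureTheory

theorem lintegral_fin_nat_prod_eq_prod {n : ℕ} {E : Fin n → Type*}
    {mE : ∀ i, MeasurableSpace (E i)} {μ : (i : Fin n) → Measure (E i)}
    [∀ i, SigmaFinite (μ i)] {f : (i : Fin n) → E i → ℝ≥0∞} (hf : ∀ i, Measurable (f i)) :
    ∫⁻ x : (i : Fin n) → E i, ∏ i, f i (x i) ∂(Measure.pi μ) =
      ∏ i, ∫⁻ x, f i x ∂(μ i) := by
  induction n with
  | zero => simp
  | succ n ih =>
      calc
        _ = ∫⁻ x : E 0 × ((i : Fin n) → E (Fin.succ i)),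
            f 0 x.1 * ∏ i : Fin n, f (Fin.succ i) (x.2 i)
            ∂((μ 0).prod (Measure.pi (fun i ↦ μ i.succ))) := by
          rw [← ((measurePreserving_piFinSuccAbove μ 0).symm).lintegral_comp_emb
            (MeasurableEquiv.measurableEmbedding _)]
          simp_rw [MeasurableEquiv.piFinSuccAbove_symm_apply, Fin.insertNthEquiv,
            Fin.prod_univ_succ, Fin.insertNth_zero, Equiv.coe_fn_mk, Fin.cons_succ,
            Fin.cons_zero]
          -- only `cast`s between the defeq types `E (succAbove 0 i)` and `E i.succ` remain
          rfl
        _ = (∫⁻ x, f 0 x ∂μ 0) * ∏ i : Fin n, ∫⁻ x, f i.succ x ∂(μ i.succ) := by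
          rw [← ih (fun i ↦ hf i.succ), ← lintegral_prod_mul (hf 0).aemeasurable
            (Finset.measurable_prod _ fun i _ ↦
              (hf i.succ).comp (measurable_pi_apply i)).aemeasurable]
        _ = ∏ i, ∫⁻ x, f i x ∂(μ i) := by rw [Fin.prod_univ_succ]

theorem lintegral_fintype_prod_eq_prod {ι : Type*} [Fintype ι] {E : ι → Type*}
    {mE : ∀ i, MeasurableSpace (E i)} {μ : (i : ι) → Measure (E i)}
    [∀ i, SigmaFinite (μ i)] {f : (i : ι) → E i → ℝ≥0∞} (hf : ∀ i, Measurable (f i)) :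
    ∫⁻ x : (i : ι) → E i, ∏ i, f i (x i) ∂(Measure.pi μ) = ∏ i, ∫⁻ x, f i x ∂(μ i) := by
  let e := (Fintype.equivFin ι).symm
  rw [← (measurePreserving_piCongrLeft _ e).lintegral_comp_emb
    (MeasurableEquiv.measurableEmbedding _)]
  simp_rw [← e.prod_comp, MeasurableEquiv.coe_piCongrLeft, Equiv.piCongrLeft_apply_apply]
  exact lintegral_fin_nat_prod_eq_prod fun i ↦ hf (e i)

theorem Measure.pi_withDensity {ι : Type*} [Fintype ι] {E : ι → Type*}
    {mE : ∀ i, MeasurableSpace (E i)} {μ : (i : ι) → Measure (E i)}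
    [∀ i, SigmaFinite (μ i)] {g : (i : ι) → E i → ℝ≥0∞} (hg : ∀ i, Measurable (g i))
    [∀ i, SigmaFinite ((μ i).withDensity (g i))] :
    Measure.pi (fun i ↦ (μ i).withDensity (g i)) =
      (Measure.pi μ).withDensity fun x ↦ ∏ i, g i (x i) := by
  refine Measure.pi_eq fun s hs ↦ ?_
  have hbox : (Set.univ.pi s).indicator (fun x ↦ ∏ i, g i (x i)) =
      fun x ↦ ∏ i, (s i).indicator (g i) (x i) := by
    funext x
    by_cases hx : x ∈ Set.univ.pi s
    · rw [Set.indicator_of_mem hx]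
      exact Finset.prod_congr rfl fun i _ ↦ (Set.indicator_of_mem (hx i trivial) _).symm
    · obtain ⟨i, hi⟩ : ∃ i, x i ∉ s i := by simpa [Set.mem_univ_pi] using hx
      rw [Set.indicator_of_notMem hx,
        Finset.prod_eq_zero (Finset.mem_univ i) (Set.indicator_of_notMem hi _)]
  rw [withDensity_apply _ (.univ_pi hs), ← lintegral_indicator (.univ_pi hs), hbox,
    lintegral_fintype_prod_eq_prod fun i ↦ (hg i).indicator (hs i)]
  simp_rw [lintegral_indicator (hs _), withDensity_apply _ (hs _)]

theorem Measure.map_add_left_withDensity {G : Type*} [MeasurableSpace G] [AddGroup G]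
    [MeasurableAdd G] (μ : Measure G) [μ.IsAddLeftInvariant] (p : G → ℝ≥0∞) (a : G) :
    (μ.withDensity p).map (a + ·) = μ.withDensity fun y ↦ p (-a + y) := by
  ext s hs
  rw [map_apply (measurable_const_add a) hs, withDensity_apply _ (measurable_const_add a hs),
    withDensity_apply _ hs]
  simpa only [neg_add_cancel_left] using
    (measurePreserving_add_left μ a).setLIntegral_comp_preimage_emb
      (measurableEmbedding_addLeft a) (fun y ↦ p (-a + y)) s

theorem Measure.map_add_left_withDensity_le_smul {G : Type*} [MeasurableSpace G] [AddGroup G]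
    [MeasurableAdd G] (μ : Measure G) [μ.IsAddLeftInvariant] {p : G → ℝ≥0∞}
    (hp : Measurable p) {a b : G} {c : ℝ≥0∞} (h : ∀ y, p (-a + y) ≤ c * p (-b + y)) :
    (μ.withDensity p).map (a + ·) ≤ c • (μ.withDensity p).map (b + ·) := by
  rw [map_add_left_withDensity, map_add_left_withDensity,
    ← withDensity_smul c (f := fun y ↦ p (-b + y)) (hp.comp (measurable_const_add _))]
  exact withDensity_mono (.of_forall h)

end MeasureTheory

noncomputable def laplacePDF (lam x : ℝ) : ℝ := 1 / (2 * lam) * Real.exp (-|x| / lam)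

@[fun_prop]
theorem measurable_laplacePDF (lam : ℝ) : Measurable (laplacePDF lam) := by
  unfold laplacePDF
  fun_prop

theorem laplaceMeasure_eq_withDensity (lam : ℝ) :
    laplaceMeasure lam = volume.withDensity fun x ↦ ENNReal.ofReal (laplacePDF lam x) := rfl

instance (lam : ℝ) : SigmaFinite (laplaceMeasure lam) := by
  rw [laplaceMeasure_eq_withDensity]
  infer_instance

theorem pi_laplaceMeasure (ι : Type*) [Fintype ι] (lam : ℝ) :
    Measure.pi (fun _ : ι ↦ laplaceMeasure lam) =
      volume.withDensity fun x ↦ ∏ i, ENNReal.ofReal (laplacePDF lam (x i)) :=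
  Measure.pi_withDensity fun _ ↦ (measurable_laplacePDF lam).ennreal_ofReal

theorem laplacePDF_le_exp_mul {lam : ℝ} (hlam : 0 ≤ lam) (x y : ℝ) :
    laplacePDF lam x ≤ Real.exp (|x - y| / lam) * laplacePDF lam y := by
  have hexp : -|x| / lam ≤ |x - y| / lam + -|y| / lam := by
    rw [← add_div]
    gcongr
    linarith [abs_sub_abs_le_abs_sub y x, abs_sub_comm x y]
  calc laplacePDF lam x ≤ 1 / (2 * lam) * Real.exp (|x - y| / lam + -|y| / lam) := by
        unfold laplacePDF
        gcongr
    _ = Real.exp (|x - y| / lam) * laplacePDF lam y := by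
        rw [Real.exp_add, laplacePDF]
        ring

theorem prod_laplacePDF_le {ι : Type*} [Fintype ι] {lam : ℝ} (hlam : 0 ≤ lam) (x y : ι → ℝ) :
    ∏ i, ENNReal.ofReal (laplacePDF lam (x i)) ≤
      ENNReal.ofReal (Real.exp ((∑ i, |x i - y i|) / lam)) *
        ∏ i, ENNReal.ofReal (laplacePDF lam (y i)) :=
  calc ∏ i, ENNReal.ofReal (laplacePDF lam (x i))
      ≤ ∏ i, ENNReal.ofReal (Real.exp (|x i - y i| / lam)) *
          ENNReal.ofReal (laplacePDF lam (y i)) :=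
        Finset.prod_le_prod' fun i _ ↦ by
          rw [← ENNReal.ofReal_mul (Real.exp_nonneg _)]
          exact ENNReal.ofReal_le_ofReal (laplacePDF_le_exp_mul hlam _ _)
    _ = ENNReal.ofReal (Real.exp ((∑ i, |x i - y i|) / lam)) *
          ∏ i, ENNReal.ofReal (laplacePDF lam (y i)) := by
        rw [Finset.prod_mul_distrib,
          ← ENNReal.ofReal_prod_of_nonneg fun i _ ↦ Real.exp_nonneg _, ← Real.exp_sum,
          Finset.sum_div]

theorem laplace_mechanism_diff_private_general {DB : Type*}
    (ε Δf : ℝ) (hε : 0 < ε) (hΔf : 0 < Δf)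
    (k : ℕ) (f : DB → (Fin k → ℝ)) (D₁ D₂ : DB)
    (hsens : ∑ i, |f D₁ i - f D₂ i| ≤ Δf)
    (S : Set (Fin k → ℝ)) :
    Measure.map (fun z => f D₁ + z) (Measure.pi fun _ : Fin k => laplaceMeasure (Δf / ε)) S ≤
      ENNReal.ofReal (Real.exp ε) *
        Measure.map (fun z => f D₂ + z) (Measure.pi fun _ : Fin k => laplaceMeasure (Δf / ε)) S := by
  set lam := Δf / ε
  have hlam : 0 ≤ lam := (div_pos hΔf hε).le
  have hscale : Δf / lam = ε := div_div_cancel₀ hΔf.ne'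
  have hshift (y : Fin k → ℝ) : ∑ i, |(-f D₁ + y) i - (-f D₂ + y) i| ≤ Δf := by
    simpa only [Pi.add_apply, Pi.neg_apply, add_sub_add_right_eq_sub, neg_sub_neg,
      abs_sub_comm (f D₂ _)] using hsens
  rw [pi_laplaceMeasure]
  refine Measure.map_add_left_withDensity_le_smul volume (by fun_prop)
    (fun y ↦ (prod_laplacePDF_le hlam (-f D₁ + y) (-f D₂ + y)).trans ?_) S
  gcongr
  rw [← hscale]
  exact div_le_div_of_nonneg_right (hshift y) hlam

/-- The Laplace mechanism is `(ε, 0)`-differentially private: adding independent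
Laplace noise of scale `λ = Δf/ε` to each coordinate of a query `f : DB → ℝ^k` whose
`ℓ¹`-sensitivity on the pair `(D₁, D₂)` is at most `Δf` yields output distributions
whose measures differ multiplicatively by at most `e^ε` on every measurable set. -/
theorem laplace_mechanism_diff_private {DB : Type*}
    (ε Δf : ℝ) (hε : 0 < ε) (hΔf : 0 < Δf)
    (k : ℕ) (hk : 1 ≤ k) (f : DB → (Fin k → ℝ)) (D₁ D₂ : DB)
    (hsens : ∑ i, |f D₁ i - f D₂ i| ≤ Δf)
    (S : Set (Fin k → ℝ)) (hS : MeasurableSet S) :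
    Measure.map (fun z => f D₁ + z) (Measure.pi fun _ : Fin k => laplaceMeasure (Δf / ε)) S ≤
      ENNReal.ofReal (Real.exp ε) *
        Measure.map (fun z => f D₂ + z) (Measure.pi fun _ : Fin k => laplaceMeasure (Δf / ε)) S :=
  laplace_mechanism_diff_private_general ε Δf hε hΔf k f D₁ D₂ hsens S
end

section
/- Let a > 0 and r > 0, and let γ(a, r) be the Gamma distribution on ℝ with shape a and rate r, i.e., with density x ↦ (r^a/Γ(a))·x^{a−1}·e^{−rx} on x ≥ 0 (and 0 for x < 0). Then the characteristic function of γ(a, r) is φ(t) = (1 − i·t/r)^{−a} for all t ∈ ℝ, where the power is taken via the principal branch. -/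
/-!
The characteristic function is the complex moment generating function `z ↦ 𝔼[exp (z X)]` on the
imaginary axis. For `Gamma(a, r)` this function is analytic on the half-plane `re z < r`, and on
the real segment `u < r` the Gamma integral gives `(1 - u / r) ^ (-a)`. The principal power
`(1 - z / r) ^ (-a)` is also analytic there, since `1 - z / r` has positive real part, so the
identity theorem extends the equality to the whole half-plane.
-/

open MeasureTheory ProbabilityTheory Complex
open Set Filter Topology

lemma integral_gammaMeasure {E : Type*} [NormedAddCommGroup E] [NormedSpace ℝ E] {a r : ℝ}
    (ha : 0 < a) (hr : 0 < r) (f : ℝ → E) :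
    ∫ x, f x ∂gammaMeasure a r =
      ∫ x in Ioi 0, (r ^ a / Real.Gamma a * x ^ (a - 1) * Real.exp (-(r * x))) • f x := by
  rw [gammaMeasure, integral_withDensity_eq_integral_toReal_smul (f := gammaPDF a r)
      (measurable_gammaPDFReal a r).ennreal_ofReal (ae_of_all _ fun _ ↦ ENNReal.ofReal_lt_top),
    ← integral_Ici_eq_integral_Ioi,
    ← setIntegral_eq_integral_of_forall_compl_eq_zero (s := Ici 0) fun x hx ↦ ?_]
  · refine setIntegral_congr_fun measurableSet_Ici fun x hx ↦ ?_
    rw [gammaPDF, ENNReal.toReal_ofReal (gammaPDFReal_nonneg ha hr x), gammaPDFReal,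
      if_pos (mem_Ici.mp hx)]
  · rw [mem_Ici, not_le] at hx
    simp [gammaPDF, gammaPDFReal, hx.not_ge]

lemma mgf_gammaMeasure {a r u : ℝ} (ha : 0 < a) (hr : 0 < r) (hu : u < r) :
    mgf id (gammaMeasure a r) u = (1 - u / r) ^ (-a) := by
  have hru : 0 < r - u := sub_pos.mpr hu
  have hexp (x : ℝ) : Real.exp (-(r * x)) * Real.exp (u * x) = Real.exp (-((r - u) * x)) := by
    rw [← Real.exp_add]; ring_nf
  calc mgf id (gammaMeasure a r) u
      = r ^ a / Real.Gamma a * ∫ x in Ioi 0, x ^ (a - 1) * Real.exp (-((r - u) * x)) := by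
        simp only [mgf, id, integral_gammaMeasure ha hr, smul_eq_mul, ← integral_const_mul]
        refine setIntegral_congr_fun measurableSet_Ioi fun x _ ↦ ?_
        rw [← hexp]; ring
    _ = (r / (r - u)) ^ a := by
        rw [Real.integral_rpow_mul_exp_neg_mul_Ioi ha hru, Real.div_rpow hr.le hru.le,
          Real.div_rpow zero_le_one hru.le, Real.one_rpow]
        field_simp [(Real.Gamma_pos_of_pos ha).ne']
    _ = ((r - u) / r) ^ (-a) := by
        rw [Real.rpow_neg (div_pos hru hr).le, ← Real.inv_rpow (div_pos hru hr).le, inv_div]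
    _ = (1 - u / r) ^ (-a) := by rw [sub_div, div_self hr.ne']

lemma Iio_subset_integrableExpSet_gammaMeasure {a r : ℝ} (ha : 0 < a) (hr : 0 < r) :
    Iio r ⊆ integrableExpSet id (gammaMeasure a r) := fun u hu ↦ by
  have := isProbabilityMeasure_gammaMeasure ha hr
  rw [integrableExpSet, mem_ofPred_eq, ← mgf_pos_iff, mgf_gammaMeasure ha hr hu]
  have : 0 < 1 - u / r := by rw [sub_pos, div_lt_one hr]; exact hu
  positivity

lemma AnalyticOnNhd.eqOn_of_preconnected_of_eventuallyEq_ofReal {E : Type*}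
    [NormedAddCommGroup E] [NormedSpace ℂ E] {f g : ℂ → E} {U : Set ℂ}
    (hf : AnalyticOnNhd ℂ f U) (hg : AnalyticOnNhd ℂ g U) (hU : IsPreconnected U) {x₀ : ℝ}
    (hx₀ : (x₀ : ℂ) ∈ U) (hfg : ∀ᶠ x : ℝ in 𝓝 x₀, f x = g x) : EqOn f g U := by
  refine hf.eqOn_of_preconnected_of_frequently_eq hg hU hx₀ ?_
  have hofReal : Tendsto ((↑) : ℝ → ℂ) (𝓝[≠] x₀) (𝓝[≠] (x₀ : ℂ)) :=
    continuous_ofReal.continuousWithinAt.tendsto_nhdsWithin fun _ hx ↦ by simpa using hx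
  exact hofReal.frequently (hfg.filter_mono nhdsWithin_le_nhds).frequently

lemma complexMGF_gammaMeasure {a r : ℝ} (ha : 0 < a) (hr : 0 < r) {z : ℂ} (hz : z.re < r) :
    complexMGF id (gammaMeasure a r) z = (1 - z / r) ^ (-(a : ℂ)) := by
  set U := {z : ℂ | z.re < r}
  have hslit {w : ℂ} (hw : w ∈ U) : 1 - w / r ∈ slitPlane := by
    left
    have : (w / r).re < 1 := by rw [div_ofReal_re, div_lt_one hr]; exact hw
    simpa using this
  have hMGF : AnalyticOnNhd ℂ (complexMGF id (gammaMeasure a r)) U :=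
    analyticOnNhd_complexMGF.mono fun w (hw : w.re < r) ↦ interior_mono
      (Iio_subset_integrableExpSet_gammaMeasure ha hr) (by rwa [interior_Iio])
  have hpow : AnalyticOnNhd ℂ (fun w : ℂ ↦ (1 - w / r) ^ (-(a : ℂ))) U := fun w hw ↦
    (analyticAt_const.sub analyticAt_id.div_const).cpow analyticAt_const (hslit hw)
  have h0 : (0 : ℂ) ∈ U := show (0 : ℂ).re < r by simpa using hr
  refine hMGF.eqOn_of_preconnected_of_eventuallyEq_ofReal hpow
    (convex_halfSpace_re_lt r).isPreconnected h0 ?_ hz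
  filter_upwards [Iio_mem_nhds hr] with u hu
  rw [complexMGF_ofReal, mgf_gammaMeasure ha hr hu, ofReal_cpow, ofReal_sub, ofReal_div]
  · simp
  · rw [sub_nonneg, div_le_one hr]; exact hu.le

/-- The characteristic function of the Gamma distribution with shape `a > 0` and rate
`r > 0` is `t ↦ (1 − i·t/r)^{−a}`, the power taken via the principal branch. -/
theorem charFun_gammaMeasure (a r : ℝ) (ha : 0 < a) (hr : 0 < r) (t : ℝ) :
    ∫ x, Complex.exp (Complex.I * t * x) ∂(gammaMeasure a r) =
      (1 - Complex.I * t / r) ^ (-(a : ℂ)) := by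
  rw [← complexMGF_gammaMeasure ha hr (by simpa using hr)]
  rfl
end

section
/- (Bounded identification confidence implies differential privacy.) Let ρ ∈ (1/2, 1) and let ν be a σ-finite measure on a measurable output space. Let p₁ and p₂ be probability densities with respect to ν. Suppose that for ν-almost every r with p₁(r) + p₂(r) > 0, both p₁(r)/(p₁(r) + p₂(r)) ≤ ρ and p₂(r)/(p₁(r) + p₂(r)) ≤ ρ. Then p₁(r) ≤ e^ε·p₂(r) and p₂(r) ≤ e^ε·p₁(r) for ν-almost every r, where ε = ln(ρ/(1−ρ)); consequently, for every measurable set S, ∫_S p₁ dν ≤ e^ε·∫_S p₂ dν + 0, i.e., the mechanism is (ln(ρ/(1−ρ)), 0)-differentially private for the pair {D₁, D₂}. -/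
open MeasureTheory

/-- Bounded identification confidence implies differential privacy: if the posterior
beliefs under a uniform prior are ν-a.e. bounded by `ρ ∈ (1/2, 1)`, then the densities
satisfy the `(ε, 0)`-differential-privacy ratio bounds ν-a.e. with `ε = ln (ρ/(1−ρ))`,
and consequently `∫_S p₁ dν ≤ e^ε · ∫_S p₂ dν + 0` for every measurable `S`. -/
theorem diff_identifiability_implies_diff_privacy
    {R : Type*} [MeasurableSpace R] (ν : Measure R) [SigmaFinite ν]
    (ρ : ℝ) (hρ : ρ ∈ Set.Ioo (1 / 2 : ℝ) 1) (p₁ p₂ : R → ℝ)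
    (hmeas₁ : Measurable p₁) (hmeas₂ : Measurable p₂)
    (hnonneg₁ : ∀ r, 0 ≤ p₁ r) (hnonneg₂ : ∀ r, 0 ≤ p₂ r)
    (hint₁ : ∫ r, p₁ r ∂ν = 1) (hint₂ : ∫ r, p₂ r ∂ν = 1)
    (hbelief : ∀ᵐ r ∂ν, 0 < p₁ r + p₂ r →
      p₁ r / (p₁ r + p₂ r) ≤ ρ ∧ p₂ r / (p₁ r + p₂ r) ≤ ρ) :
    (∀ᵐ r ∂ν, p₁ r ≤ Real.exp (Real.log (ρ / (1 - ρ))) * p₂ r ∧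
        p₂ r ≤ Real.exp (Real.log (ρ / (1 - ρ))) * p₁ r) ∧
      ∀ S : Set R, MeasurableSet S →
        ∫ r in S, p₁ r ∂ν ≤ Real.exp (Real.log (ρ / (1 - ρ))) * ∫ r in S, p₂ r ∂ν + 0 := by
  obtain ⟨hρ1, hρ2⟩ := hρ
  have h1ρ : (0:ℝ) < 1 - ρ := by linarith
  have hρpos : (0:ℝ) < ρ := by linarith
  have hcpos : (0:ℝ) < ρ / (1 - ρ) := div_pos hρpos h1ρ
  have hexp : Real.exp (Real.log (ρ / (1 - ρ))) = ρ / (1 - ρ) := Real.exp_log hcpos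
  have hae : ∀ᵐ r ∂ν, p₁ r ≤ Real.exp (Real.log (ρ / (1 - ρ))) * p₂ r ∧
      p₂ r ≤ Real.exp (Real.log (ρ / (1 - ρ))) * p₁ r := by
    filter_upwards [hbelief] with r hr
    rw [hexp]
    rcases lt_or_ge 0 (p₁ r + p₂ r) with hpos | hle
    · obtain ⟨h1, h2⟩ := hr hpos
      rw [div_le_iff₀ hpos] at h1 h2
      constructor
      · rw [div_mul_eq_mul_div, le_div_iff₀ h1ρ]; nlinarith
      · rw [div_mul_eq_mul_div, le_div_iff₀ h1ρ]; nlinarith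
    · have h1 : p₁ r = 0 := le_antisymm (by nlinarith [hnonneg₁ r, hnonneg₂ r]) (hnonneg₁ r)
      have h2 : p₂ r = 0 := le_antisymm (by nlinarith [hnonneg₁ r, hnonneg₂ r]) (hnonneg₂ r)
      simp [h1, h2]
  refine ⟨hae, fun S hS => ?_⟩
  have hi₁ : Integrable p₁ ν := by
    by_contra h; rw [integral_undef h] at hint₁; norm_num at hint₁
  have hi₂ : Integrable p₂ ν := by
    by_contra h; rw [integral_undef h] at hint₂; norm_num at hint₂
  rw [add_zero, ← integral_const_mul]
  refine integral_mono_ae (hi₁.restrict) ((hi₂.const_mul _).restrict) ?_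
  exact (ae_restrict_of_ae (hae.mono fun r h => h.1))
end
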